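/- Along solutions of the full matrix axisymmetric MHD–Zeitlin flow, the Hamiltonian H = -tr(Ψ(ΔΨ) - Q²) - tr(Ξ(ΔΞ) - P²) is conserved, assuming Δ is symmetric with respect to the trace form. -/

import Mathlib

/-!
Since `Δ` is symmetric for the trace form, `d/dt tr(Ψ ΔΨ) = 2 tr(ΔΨ' Ψ)` and
`d/dt tr(Ξ ΔΞ) = 2 tr(Ξ' ΔΞ)`, so `dH/dt` only involves the right-hand sides of the equations
for `ΔΨ`, `P`, `Q`, `Ξ`, paired against the state. Every resulting term has the form
`tr(⁅A, B⁆ C)`, and the invariance `tr(⁅A, B⁆ C) = tr(A ⁅B, C⁆)` of the trace form makes them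
cancel in pairs.
-/

open Matrix

attribute [local instance] Matrix.normedAddCommGroup Matrix.normedSpace

namespace Matrix

variable {n R : Type*} [Fintype n] [CommRing R]

theorem trace_lie_mul (A B C : Matrix n n R) : (⁅A, B⁆ * C).trace = (A * ⁅B, C⁆).trace := by
  simp only [Ring.lie_def, sub_mul, mul_sub, trace_sub, Matrix.mul_assoc]
  rw [trace_mul_comm B (A * C), Matrix.mul_assoc]

theorem trace_lie_mul_cycle (A B C : Matrix n n R) :
    (⁅A, B⁆ * C).trace = (⁅C, A⁆ * B).trace := by
  rw [trace_lie_mul C A B, trace_mul_comm C]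

theorem trace_lie_mul_swap (A B C : Matrix n n R) :
    (⁅A, B⁆ * C).trace = -(⁅A, C⁆ * B).trace := by
  rw [trace_lie_mul, trace_lie_mul, Ring.lie_def, Ring.lie_def, ← neg_sub, mul_neg, trace_neg]

theorem trace_lie_mul_self_right (A B : Matrix n n R) : (⁅A, B⁆ * B).trace = 0 := by
  rw [trace_lie_mul, Ring.lie_def, sub_self, Matrix.mul_zero, trace_zero]

theorem trace_lie_mul_self_left (A B : Matrix n n R) : (⁅A, B⁆ * A).trace = 0 := by
  rw [trace_lie_mul_cycle, Ring.lie_def, sub_self, Matrix.zero_mul, trace_zero]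

theorem trace_mhd_energy_balance (Ψ P Q Ξ W E : Matrix n n R) :
    ((⁅W, Ψ⁆ + ⁅Ξ, E⁆ + 2 • ⁅Q, Ψ⁆ + 2 • ⁅Ξ, P⁆) * Ψ).trace + (⁅Ξ, Ψ⁆ * E).trace =
      ((⁅Q, Ψ⁆ + ⁅Ξ, P⁆) * Q).trace + ((⁅P, Ψ⁆ + ⁅Ξ, Q⁆ + 2 • ⁅Ψ, Ξ⁆) * P).trace := by
  simp only [two_smul, add_mul, trace_add, trace_lie_mul_self_left, trace_lie_mul_self_right,
    add_zero, zero_add]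
  rw [trace_lie_mul_swap Ξ E, trace_lie_mul_swap Ξ P Q, trace_lie_mul_cycle Ξ P Ψ]
  ring

end Matrix

section Calculus

variable {n 𝕜 : Type*} [Fintype n] [RCLike 𝕜]

theorem hasDerivAt_trace_mul {f g : ℝ → Matrix n n 𝕜} {f' g' : Matrix n n 𝕜} {t : ℝ}
    (hf : HasDerivAt f f' t) (hg : HasDerivAt g g' t) :
    HasDerivAt (fun s => (f s * g s).trace) ((f' * g t).trace + (f t * g').trace) t := by
  have entry {h : ℝ → Matrix n n 𝕜} {h' : Matrix n n 𝕜} (hh : HasDerivAt h h' t) (i j : n) :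
      HasDerivAt (fun s => h s i j) (h' i j) t :=
    hasDerivAt_pi.1 (hasDerivAt_pi.1 hh i) j
  simp only [trace, diag, mul_apply, ← Finset.sum_add_distrib]
  exact HasDerivAt.fun_sum fun i _ => HasDerivAt.fun_sum fun j _ =>
    (entry hf i j).mul (entry hg j i)

theorem hasDerivAt_trace_mul_map_self (Δ : Matrix n n 𝕜 →ₗ[𝕜] Matrix n n 𝕜)
    (hΔ : ∀ A B, (Δ A * B).trace = (A * Δ B).trace) {f : ℝ → Matrix n n 𝕜}
    {f' : Matrix n n 𝕜} {t : ℝ} (hf : HasDerivAt f f' t) :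
    HasDerivAt (fun s => (f s * Δ (f s)).trace) (2 * (f' * Δ (f t)).trace) t := by
  have hΔf : HasDerivAt (fun s => Δ (f s)) (Δ f') t :=
    (Δ.restrictScalars ℝ).toContinuousLinearMap.hasFDerivAt.comp_hasDerivAt t hf
  convert hasDerivAt_trace_mul hf hΔf using 1
  rw [← hΔ (f t) f', trace_mul_comm (Δ (f t)) f', two_mul]

theorem hasDerivAt_trace_mul_self {f : ℝ → Matrix n n 𝕜} {f' : Matrix n n 𝕜} {t : ℝ}
    (hf : HasDerivAt f f' t) : HasDerivAt (fun s => (f s * f s).trace) (2 * (f' * f t).trace) t :=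
  hasDerivAt_trace_mul_map_self LinearMap.id (fun _ _ => rfl) hf

end Calculus

theorem stmt9_general {N : ℕ}
    (Δ : Matrix (Fin N) (Fin N) ℂ ≃ₗ[ℂ] Matrix (Fin N) (Fin N) ℂ)
    (hΔ : ∀ A B : Matrix (Fin N) (Fin N) ℂ,
      ((Δ A) * B).trace = (A * (Δ B)).trace)
    (Ψ P Q Ξ : ℝ → Matrix (Fin N) (Fin N) ℂ)
    (hΨ : ∀ t, HasDerivAt Ψ (Δ.symm
      (⁅Δ (Ψ t), Ψ t⁆ + ⁅Ξ t, Δ (Ξ t)⁆ + 2 • ⁅Q t, Ψ t⁆ + 2 • ⁅Ξ t, P t⁆)) t)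
    (hP : ∀ t, HasDerivAt P (⁅P t, Ψ t⁆ + ⁅Ξ t, Q t⁆ + 2 • ⁅Ψ t, Ξ t⁆) t)
    (hQ : ∀ t, HasDerivAt Q (⁅Q t, Ψ t⁆ + ⁅Ξ t, P t⁆) t)
    (hΞ : ∀ t, HasDerivAt Ξ ⁅Ξ t, Ψ t⁆ t) :
    ∀ t, -(Ψ t * Δ (Ψ t) - Q t ^ 2).trace - (Ξ t * Δ (Ξ t) - P t ^ 2).trace =
      -(Ψ 0 * Δ (Ψ 0) - Q 0 ^ 2).trace - (Ξ 0 * Δ (Ξ 0) - P 0 ^ 2).trace := by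
  have hH : ∀ t, HasDerivAt (fun s => -(Ψ s * Δ (Ψ s) - Q s ^ 2).trace
      - (Ξ s * Δ (Ξ s) - P s ^ 2).trace) 0 t := by
    intro t
    simp only [trace_sub, sq]
    refine ((((hasDerivAt_trace_mul_map_self Δ.toLinearMap hΔ (hΨ t)).sub
      (hasDerivAt_trace_mul_self (hQ t))).neg).sub
      ((hasDerivAt_trace_mul_map_self Δ.toLinearMap hΔ (hΞ t)).sub
      (hasDerivAt_trace_mul_self (hP t)))).congr_deriv ?_
    simp only [LinearEquiv.coe_coe]
    rw [← hΔ _ (Ψ t), LinearEquiv.apply_symm_apply]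
    linear_combination -2 * trace_mhd_energy_balance (Ψ t) (P t) (Q t) (Ξ t) (Δ (Ψ t)) (Δ (Ξ t))
  intro t
  exact is_const_of_deriv_eq_zero (fun s => (hH s).differentiableAt) (fun s => (hH s).deriv) t 0

/-- Along solutions of the full matrix axisymmetric MHD–Zeitlin flow (with
`W = ΔΨ`), the Hamiltonian `H = -tr(Ψ(ΔΨ) - Q²) - tr(Ξ(ΔΞ) - P²)` is
conserved, where `Δ` is invertible and symmetric for the trace form. -/
theorem stmt9 {N : ℕ}
    (Δ : Matrix (Fin N) (Fin N) ℂ ≃ₗ[ℂ] Matrix (Fin N) (Fin N) ℂ)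
    (hΔ : ∀ A B : Matrix (Fin N) (Fin N) ℂ,
      ((Δ A) * B).trace = (A * (Δ B)).trace)
    (Ψ P Q Ξ : ℝ → Matrix (Fin N) (Fin N) ℂ)
    (hsu : ∀ t, (Ψ t)ᴴ = -Ψ t ∧ (P t)ᴴ = -P t ∧ (Q t)ᴴ = -Q t ∧ (Ξ t)ᴴ = -Ξ t)
    (htr : ∀ t, (Ψ t).trace = 0 ∧ (P t).trace = 0 ∧ (Q t).trace = 0 ∧
      (Ξ t).trace = 0)
    (hΨ : ∀ t, HasDerivAt Ψ (Δ.symm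
      (⁅Δ (Ψ t), Ψ t⁆ + ⁅Ξ t, Δ (Ξ t)⁆ + 2 • ⁅Q t, Ψ t⁆ + 2 • ⁅Ξ t, P t⁆)) t)
    (hP : ∀ t, HasDerivAt P (⁅P t, Ψ t⁆ + ⁅Ξ t, Q t⁆ + 2 • ⁅Ψ t, Ξ t⁆) t)
    (hQ : ∀ t, HasDerivAt Q (⁅Q t, Ψ t⁆ + ⁅Ξ t, P t⁆) t)
    (hΞ : ∀ t, HasDerivAt Ξ ⁅Ξ t, Ψ t⁆ t) :
    ∀ t, -(Ψ t * Δ (Ψ t) - Q t ^ 2).trace - (Ξ t * Δ (Ξ t) - P t ^ 2).trace =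
      -(Ψ 0 * Δ (Ψ 0) - Q 0 ^ 2).trace - (Ξ 0 * Δ (Ξ 0) - P 0 ^ 2).trace :=
  stmt9_general Δ hΔ Ψ P Q Ξ hΨ hP hQ hΞ
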